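/- arXiv:2412.06114 — 2 statements merged into one kernel-verified Lean document; each statement's English description precedes it below -/
import Mathlib

section
/- Monotonicity of the counterfactual cumulative incidence in the pre-intermediate terminal hazard: let λ₀ᵃ and λ₀ᵇ be two continuous nonnegative pre-intermediate terminal hazards with λ₀ᵃ(t) ≤ λ₀ᵇ(t) for all t ≥ 0, and let Fᵃ and Fᵇ be the corresponding counterfactual cumulative incidence functions (with the same λ⋆ and λ₁). Then Fᵃ(t) ≤ Fᵇ(t) for all t ≥ 0. -/
open MeasureTheory ProbabilityTheory Filter Set

/-- Cumulative hazard `Λ(t) = ∫₀ᵗ λ(u) du`. -/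
noncomputable def cumHaz (lam : ℝ → ℝ) (t : ℝ) : ℝ := ∫ u in (0:ℝ)..t, lam u

/-- Post-intermediate cumulative hazard `Λ₁(t,s) = ∫ₛᵗ λ₁(u,s) du`. -/
noncomputable def cumHaz1 (lam1 : ℝ → ℝ → ℝ) (t s : ℝ) : ℝ := ∫ u in s..t, lam1 u s

/-- The counterfactual cumulative incidence function
`F(t) = ∫₀ᵗ e^{−Λ₀(s)−Λ⋆(s)} λ₀(s) ds + ∫₀ᵗ e^{−Λ₀(s)−Λ⋆(s)} λ⋆(s) (1 − e^{−Λ₁(t,s)}) ds`. -/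
noncomputable def cif (lamS lam0 : ℝ → ℝ) (lam1 : ℝ → ℝ → ℝ) (t : ℝ) : ℝ :=
  (∫ s in (0:ℝ)..t, Real.exp (-cumHaz lam0 s - cumHaz lamS s) * lam0 s) +
  ∫ s in (0:ℝ)..t, Real.exp (-cumHaz lam0 s - cumHaz lamS s) * lamS s *
    (1 - Real.exp (-cumHaz1 lam1 t s))

/-! With `S(s) = exp (-Λ₀(s) - Λ⋆(s))` the overall survival before the intermediate event, the
fundamental theorem of calculus gives `∫₀ᵗ S (λ₀ + λ⋆) = 1 - S(t)`, hence
`F(t) = 1 - S(t) - ∫₀ᵗ S(s) λ⋆(s) exp (-Λ₁(t,s)) ds`.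
A larger `λ₀` makes `S` pointwise smaller, which increases both terms. -/

open intervalIntegral

lemma ContinuousOn.exists_continuous_eqOn_Ici {α β : Type*} [TopologicalSpace α] [LinearOrder α]
    [OrderClosedTopology α] [TopologicalSpace β] {f : α → β} {a : α}
    (hf : ContinuousOn f (Ici a)) : ∃ g : α → β, Continuous g ∧ EqOn g f (Ici a) :=
  ⟨fun u => f (max a u), hf.comp_continuous (continuous_const.max continuous_id)
    fun u => le_max_left a u, fun u hu => by simp only [max_eq_right (mem_Ici.1 hu)]⟩

lemma ContinuousOn.exists_continuous_eqOn_triangle {α β : Type*} [TopologicalSpace α]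
    [LinearOrder α] [OrderClosedTopology α] [TopologicalSpace β] {f : α → α → β} {a : α}
    (hf : ContinuousOn (Function.uncurry f) {p : α × α | a ≤ p.2 ∧ p.2 ≤ p.1}) :
    ∃ g : α → α → β, Continuous (Function.uncurry g) ∧ ∀ s u, a ≤ s → s ≤ u → g u s = f u s := by
  refine ⟨fun u s => f (max (max a s) u) (max a s), ?_, fun s u hs hsu => ?_⟩
  · have hproj : Continuous fun p : α × α => (max (max a p.2) p.1, max a p.2) :=
      ((continuous_const.max continuous_snd).max continuous_fst).prodMk
        (continuous_const.max continuous_snd)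
    exact hf.comp_continuous hproj fun p => ⟨le_max_left _ _, le_max_left _ _⟩
  · simp only [max_eq_right hs, max_eq_right hsu]

section Congr

variable {f g : ℝ → ℝ} {t : ℝ}

lemma cumHaz_congr (ht : 0 ≤ t) (h : EqOn f g (Icc 0 t)) : cumHaz f t = cumHaz g t :=
  integral_congr (by rwa [uIcc_of_le ht])

lemma cif_congr {lamS lamS' lam0 lam0' : ℝ → ℝ} {lam1 lam1' : ℝ → ℝ → ℝ} (ht : 0 ≤ t)
    (hS : EqOn lamS lamS' (Icc 0 t)) (h0 : EqOn lam0 lam0' (Icc 0 t))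
    (h1 : ∀ s u, 0 ≤ s → s ≤ u → u ≤ t → lam1 u s = lam1' u s) :
    cif lamS lam0 lam1 t = cif lamS' lam0' lam1' t := by
  have hcum : ∀ s ∈ Icc 0 t, cumHaz lam0 s = cumHaz lam0' s ∧ cumHaz lamS s = cumHaz lamS' s :=
    fun s hs => ⟨cumHaz_congr hs.1 (h0.mono (Icc_subset_Icc_right hs.2)),
      cumHaz_congr hs.1 (hS.mono (Icc_subset_Icc_right hs.2))⟩
  have hcum1 : ∀ s ∈ Icc 0 t, cumHaz1 lam1 t s = cumHaz1 lam1' t s := fun s hs =>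
    integral_congr fun u hu => by
      rw [uIcc_of_le hs.2] at hu
      exact h1 s u hs.1 hu.1 hu.2
  unfold cif
  congr 1 <;> refine integral_congr fun s hs => ?_ <;> rw [uIcc_of_le ht] at hs <;>
    simp only [(hcum s hs).1, (hcum s hs).2, hcum1 s hs, hS hs, h0 hs]

end Congr

section Continuous

variable {f g : ℝ → ℝ} {t : ℝ}

lemma cumHaz_zero : cumHaz f 0 = 0 := integral_same

lemma hasDerivAt_cumHaz (hf : Continuous f) (t : ℝ) : HasDerivAt (cumHaz f) (f t) t :=
  integral_hasDerivAt_right (hf.intervalIntegrable _ _)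
    hf.aestronglyMeasurable.stronglyMeasurableAtFilter hf.continuousAt

lemma continuous_cumHaz (hf : Continuous f) : Continuous (cumHaz f) :=
  continuous_primitive (fun a b => hf.intervalIntegrable a b) 0

lemma cumHaz_add (hf : Continuous f) (hg : Continuous g) (t : ℝ) :
    cumHaz (f + g) t = cumHaz f t + cumHaz g t :=
  integral_add (hf.intervalIntegrable _ _) (hg.intervalIntegrable _ _)

lemma cumHaz_le_cumHaz (ht : 0 ≤ t) (hf : IntervalIntegrable f volume 0 t)
    (hg : IntervalIntegrable g volume 0 t) (h : ∀ s ∈ Icc 0 t, f s ≤ g s) :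
    cumHaz f t ≤ cumHaz g t :=
  integral_mono_on ht hf hg h

lemma integral_exp_neg_cumHaz_mul (hf : Continuous f) (t : ℝ) :
    ∫ s in (0:ℝ)..t, Real.exp (-cumHaz f s) * f s = 1 - Real.exp (-cumHaz f t) := by
  have hderiv : ∀ s ∈ uIcc (0:ℝ) t,
      HasDerivAt (fun x => -Real.exp (-cumHaz f x)) (Real.exp (-cumHaz f s) * f s) s :=
    fun s _ => (hasDerivAt_cumHaz hf s).neg.exp.neg.congr_deriv (by rw [Pi.neg_apply]; ring)
  have hint : IntervalIntegrable (fun s => Real.exp (-cumHaz f s) * f s) volume 0 t :=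
    ((continuous_cumHaz hf).neg.rexp.mul hf).intervalIntegrable _ _
  rw [integral_eq_sub_of_hasDerivAt hderiv hint, cumHaz_zero, neg_zero, Real.exp_zero]
  ring

lemma continuous_cumHaz1 {lam1 : ℝ → ℝ → ℝ} (h1 : Continuous (Function.uncurry lam1)) (t : ℝ) :
    Continuous (cumHaz1 lam1 t) := by
  have hswap : Continuous (Function.uncurry fun s u => lam1 u s) := h1.comp continuous_swap
  have hsplit : cumHaz1 lam1 t = fun s => (∫ u in (0:ℝ)..t, lam1 u s) - ∫ u in (0:ℝ)..s, lam1 u s :=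
    funext fun s => (integral_interval_sub_left
      ((hswap.uncurry_left s).intervalIntegrable _ _)
      ((hswap.uncurry_left s).intervalIntegrable _ _)).symm
  rw [hsplit]
  exact (continuous_parametric_intervalIntegral_of_continuous' hswap 0 t).sub
    (continuous_parametric_intervalIntegral_of_continuous hswap continuous_id)

variable {lamS lam0 lam0a lam0b : ℝ → ℝ} {lam1 : ℝ → ℝ → ℝ}

theorem cif_eq_one_sub (hS : Continuous lamS) (h0 : Continuous lam0)
    (h1 : Continuous (Function.uncurry lam1)) (t : ℝ) :
    cif lamS lam0 lam1 t = 1 - Real.exp (-cumHaz lam0 t - cumHaz lamS t) -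
      ∫ s in (0:ℝ)..t, Real.exp (-cumHaz lam0 s - cumHaz lamS s) * lamS s *
        Real.exp (-cumHaz1 lam1 t s) := by
  have hSc : Continuous fun s => Real.exp (-cumHaz lam0 s - cumHaz lamS s) :=
    ((continuous_cumHaz h0).neg.sub (continuous_cumHaz hS)).rexp
  have hsurv : ∫ s in (0:ℝ)..t, Real.exp (-cumHaz lam0 s - cumHaz lamS s) * (lam0 s + lamS s) =
      1 - Real.exp (-cumHaz lam0 t - cumHaz lamS t) := by
    simpa only [cumHaz_add h0 hS, neg_add, ← sub_eq_add_neg, Pi.add_apply]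
      using integral_exp_neg_cumHaz_mul (h0.add hS) t
  have hE : Continuous fun s => Real.exp (-cumHaz1 lam1 t s) := (continuous_cumHaz1 h1 t).neg.rexp
  have hsplit := integral_add ((hSc.mul h0).intervalIntegrable 0 t)
    (((hSc.mul hS).mul ((continuous_const (y := (1:ℝ))).sub hE)).intervalIntegrable
      (μ := volume) 0 t)
  have hdiff := integral_sub ((hSc.mul (h0.add hS)).intervalIntegrable 0 t)
    (((hSc.mul hS).mul hE).intervalIntegrable (μ := volume) 0 t)
  simp only [Pi.mul_apply, Pi.add_apply, Pi.sub_apply] at hsplit hdiff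
  unfold cif
  rw [← hsplit, ← hsurv, ← hdiff]
  exact integral_congr fun s _ => by ring

theorem cif_mono_of_continuous (hS : Continuous lamS) (h0a : Continuous lam0a)
    (h0b : Continuous lam0b) (h1 : Continuous (Function.uncurry lam1)) (ht : 0 ≤ t)
    (hSnn : ∀ s ∈ Icc 0 t, 0 ≤ lamS s) (hle : ∀ s ∈ Icc 0 t, lam0a s ≤ lam0b s) :
    cif lamS lam0a lam1 t ≤ cif lamS lam0b lam1 t := by
  have hsurv : ∀ s ∈ Icc 0 t, Real.exp (-cumHaz lam0b s - cumHaz lamS s) ≤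
      Real.exp (-cumHaz lam0a s - cumHaz lamS s) := fun s hs => by
    have := cumHaz_le_cumHaz hs.1 (h0a.intervalIntegrable _ _) (h0b.intervalIntegrable _ _)
      fun u hu => hle u (Icc_subset_Icc_right hs.2 hu)
    gcongr
  have hcont : ∀ lam0 : ℝ → ℝ, Continuous lam0 → Continuous fun s =>
      Real.exp (-cumHaz lam0 s - cumHaz lamS s) * lamS s * Real.exp (-cumHaz1 lam1 t s) :=
    fun lam0 h0 => ((((continuous_cumHaz h0).neg.sub (continuous_cumHaz hS)).rexp.mul hS).mul
      (continuous_cumHaz1 h1 t).neg.rexp)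
  have hint := integral_mono_on ht ((hcont lam0b h0b).intervalIntegrable (μ := volume) 0 t)
    ((hcont lam0a h0a).intervalIntegrable _ _) fun s hs =>
      mul_le_mul_of_nonneg_right (mul_le_mul_of_nonneg_right (hsurv s hs) (hSnn s hs))
        (Real.exp_pos _).le
  rw [cif_eq_one_sub hS h0a h1, cif_eq_one_sub hS h0b h1]
  linarith [hsurv t ⟨ht, le_rfl⟩]

end Continuous

theorem cif_mono_in_lam0_general (lamS lam0a lam0b : ℝ → ℝ) (lam1 : ℝ → ℝ → ℝ)
    (hScont : ContinuousOn lamS (Set.Ici 0))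
    (h0acont : ContinuousOn lam0a (Set.Ici 0))
    (h0bcont : ContinuousOn lam0b (Set.Ici 0))
    (h1cont : ContinuousOn (fun p : ℝ × ℝ => lam1 p.1 p.2) {p : ℝ × ℝ | 0 ≤ p.2 ∧ p.2 ≤ p.1})
    (hSnn : ∀ t ∈ Set.Ici (0:ℝ), 0 ≤ lamS t)
    (hle : ∀ t ∈ Set.Ici (0:ℝ), lam0a t ≤ lam0b t) :
    ∀ t : ℝ, 0 ≤ t → cif lamS lam0a lam1 t ≤ cif lamS lam0b lam1 t := by
  intro t ht
  obtain ⟨gS, hgS, hgS_eq⟩ := hScont.exists_continuous_eqOn_Ici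
  obtain ⟨ga, hga, hga_eq⟩ := h0acont.exists_continuous_eqOn_Ici
  obtain ⟨gb, hgb, hgb_eq⟩ := h0bcont.exists_continuous_eqOn_Ici
  obtain ⟨g1, hg1, hg1_eq⟩ := h1cont.exists_continuous_eqOn_triangle
  have hIcc : Icc 0 t ⊆ Ici 0 := Icc_subset_Ici_self
  have hg1_eq' : ∀ s u, 0 ≤ s → s ≤ u → u ≤ t → g1 u s = lam1 u s :=
    fun s u hs hsu _ => hg1_eq s u hs hsu
  rw [← cif_congr ht (hgS_eq.mono hIcc) (hga_eq.mono hIcc) hg1_eq',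
    ← cif_congr ht (hgS_eq.mono hIcc) (hgb_eq.mono hIcc) hg1_eq']
  refine cif_mono_of_continuous hgS hga hgb hg1 ht (fun s hs => ?_) fun s hs => ?_
  · rw [hgS_eq (hIcc hs)]
    exact hSnn s (hIcc hs)
  · rw [hga_eq (hIcc hs), hgb_eq (hIcc hs)]
    exact hle s (hIcc hs)

/-- monotonicity of `F` in the pre-intermediate terminal hazard. -/
theorem cif_mono_in_lam0 (lamS lam0a lam0b : ℝ → ℝ) (lam1 : ℝ → ℝ → ℝ)
    (hScont : ContinuousOn lamS (Set.Ici 0))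
    (h0acont : ContinuousOn lam0a (Set.Ici 0))
    (h0bcont : ContinuousOn lam0b (Set.Ici 0))
    (h1cont : ContinuousOn (fun p : ℝ × ℝ => lam1 p.1 p.2) {p : ℝ × ℝ | 0 ≤ p.2 ∧ p.2 ≤ p.1})
    (hSnn : ∀ t ∈ Set.Ici (0:ℝ), 0 ≤ lamS t)
    (h0ann : ∀ t ∈ Set.Ici (0:ℝ), 0 ≤ lam0a t)
    (h0bnn : ∀ t ∈ Set.Ici (0:ℝ), 0 ≤ lam0b t)
    (h1nn : ∀ s t : ℝ, 0 ≤ s → s ≤ t → 0 ≤ lam1 t s)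
    (hle : ∀ t ∈ Set.Ici (0:ℝ), lam0a t ≤ lam0b t) :
    ∀ t : ℝ, 0 ≤ t → cif lamS lam0a lam1 t ≤ cif lamS lam0b lam1 t :=
  cif_mono_in_lam0_general lamS lam0a lam0b lam1 hScont h0acont h0bcont h1cont hSnn hle
end

section
/- Cumulative incidence of the terminal event following the intermediate event in the latent-time construction: for every t ≥ 0, P(T₂ ≤ t and T₁ < D₀) = ∫₀ᵗ exp{−Λ₀(s) − Λ⋆(s)} λ⋆(s) (1 − exp{−Λ₁(t,s)}) ds. -/
/-!
Write `Λ⋆, Λ₀, Λ₁` for the cumulative hazards. The cumulative hazard `Λ⋆` extends to an order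
isomorphism `e` of `ℝ`, so `T₁ = e⁻¹(E₁)` is a measurable function of `E₁`, independent of
`(E₂, E₃)`, and by the change of variables `x = Λ⋆(s)` it has density `λ⋆ e^{-Λ⋆}` on `[0, ∞)`.
By strict monotonicity of `Λ₀` and `Λ₁(·, T₁)` the event `{T₂ ≤ t, T₁ < D₀}` is
`{T₁ ≤ t, Λ₀(T₁) < E₂, E₃ ≤ Λ₁(t, T₁)}`; integrating the conditional probability
`e^{-Λ₀(s)} (1 - e^{-Λ₁(t,s)})` against the law of `T₁` gives the formula.
-/

open MeasureTheory ProbabilityTheory Filter Set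

open scoped ENNReal

section CumulativeHazard

variable {lam : ℝ → ℝ}

lemma continuous_comp_max_zero (hc : ContinuousOn lam (Ici 0)) :
    Continuous fun x => lam (max x 0) :=
  hc.comp_continuous (continuous_id.max continuous_const) fun x => le_max_right x 0

lemma eqOn_cumHaz_comp_max_zero (lam : ℝ → ℝ) :
    EqOn (cumHaz fun x => lam (max x 0)) (cumHaz lam) (Ici 0) := fun x hx =>
  intervalIntegral.integral_congr fun u hu => by
    rw [uIcc_of_le hx] at hu
    simp only [max_eq_left hu.1]

lemma hasDerivAt_cumHaz_s14 (hc : Continuous lam) (x : ℝ) : HasDerivAt (cumHaz lam) (lam x) x :=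
  (hc.integral_hasStrictDerivAt 0 x).hasDerivAt

lemma strictMono_cumHaz (hc : Continuous lam) (hpos : ∀ x, 0 < lam x) :
    StrictMono (cumHaz lam) :=
  strictMono_of_hasDerivAt_pos (hasDerivAt_cumHaz_s14 hc) hpos

lemma hasDerivWithinAt_cumHaz (hc : ContinuousOn lam (Ici 0)) {x : ℝ} (hx : 0 ≤ x) :
    HasDerivWithinAt (cumHaz lam) (lam x) (Ici 0) x := by
  have h := (hasDerivAt_cumHaz_s14 (continuous_comp_max_zero hc) x).hasDerivWithinAt (s := Ici 0)
  rw [max_eq_left hx] at h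
  exact h.congr (eqOn_cumHaz_comp_max_zero lam).symm (eqOn_cumHaz_comp_max_zero lam hx).symm

lemma continuousOn_cumHaz (hc : ContinuousOn lam (Ici 0)) : ContinuousOn (cumHaz lam) (Ici 0) :=
  fun _ hx => (hasDerivWithinAt_cumHaz hc hx).continuousWithinAt

lemma strictMonoOn_cumHaz (hc : ContinuousOn lam (Ici 0)) (hpos : ∀ x ∈ Ici (0:ℝ), 0 < lam x) :
    StrictMonoOn (cumHaz lam) (Ici 0) := fun x hx y hy hxy => by
  rw [← eqOn_cumHaz_comp_max_zero lam hx, ← eqOn_cumHaz_comp_max_zero lam hy]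
  exact strictMono_cumHaz (continuous_comp_max_zero hc) (fun x => hpos _ (le_max_right x 0)) hxy

lemma cumHaz_nonneg (hnn : ∀ x ∈ Ici (0:ℝ), 0 ≤ lam x) {x : ℝ} (hx : 0 ≤ x) :
    0 ≤ cumHaz lam x :=
  intervalIntegral.integral_nonneg hx fun u hu => hnn u hu.1

/-- Below `0` the extended cumulative hazard is linear with slope `λ(0) > 0`, so the extension is
an increasing bijection of `ℝ`. -/
lemma exists_orderIso_eqOn_cumHaz (hc : ContinuousOn lam (Ici 0))
    (hpos : ∀ x ∈ Ici (0:ℝ), 0 < lam x) (htop : Tendsto (cumHaz lam) atTop atTop) :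
    ∃ e : ℝ ≃o ℝ, EqOn e (cumHaz lam) (Ici 0) := by
  set Λ := cumHaz fun x => lam (max x 0)
  have hcont : Continuous fun x => lam (max x 0) := continuous_comp_max_zero hc
  have hlin : ∀ x ≤ 0, Λ x = x * lam 0 := fun x hx => by
    rw [show Λ x = ∫ _ in (0:ℝ)..x, lam 0 from intervalIntegral.integral_congr fun u hu => by
      rw [uIcc_of_ge hx] at hu
      simp only [max_eq_right hu.2]]
    simp
  have hbot : Tendsto Λ atBot atBot :=
    (tendsto_id.atBot_mul_const (hpos 0 self_mem_Ici)).congr'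
      ((eventually_le_atBot 0).mono fun x hx => (hlin x hx).symm)
  have htop' : Tendsto Λ atTop atTop :=
    htop.congr' ((eventually_ge_atTop 0).mono fun x hx => (eqOn_cumHaz_comp_max_zero lam hx).symm)
  have hsurj : Function.Surjective Λ :=
    (continuous_iff_continuousAt.2 fun x => (hasDerivAt_cumHaz_s14 hcont x).continuousAt).surjective
      htop' hbot
  exact ⟨(strictMono_cumHaz hcont fun x => hpos _ (le_max_right x 0)).orderIsoOfSurjective Λ hsurj,
    eqOn_cumHaz_comp_max_zero lam⟩

end CumulativeHazard

section PostIntermediateHazard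

variable {lam1 : ℝ → ℝ → ℝ}

lemma continuousOn_cumHaz1
    (hc : ContinuousOn (fun p : ℝ × ℝ => lam1 p.1 p.2) {p : ℝ × ℝ | 0 ≤ p.2 ∧ p.2 ≤ p.1})
    (t : ℝ) : ContinuousOn (cumHaz1 lam1 t) (Icc 0 t) := by
  set f : ℝ → ℝ → ℝ := fun s u => lam1 (max u (max s 0)) (max s 0)
  have hf : Continuous (Function.uncurry f) :=
    hc.comp_continuous (f := fun p : ℝ × ℝ => (max p.2 (max p.1 0), max p.1 0)) (by fun_prop)
      fun p => ⟨le_max_right _ _, le_max_right _ _⟩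
  have hF : Continuous fun s => ∫ u in s..t, f s u :=
    (intervalIntegral.continuous_parametric_intervalIntegral_of_continuous (a₀ := t) hf
      continuous_id).neg.congr fun s => (intervalIntegral.integral_symm t s).symm
  refine hF.continuousOn.congr fun s hs => intervalIntegral.integral_congr fun u hu => ?_
  rw [uIcc_of_le hs.2] at hu
  simp only [f, max_eq_left hs.1, max_eq_left hu.1]

lemma cumHaz1_nonneg {s t : ℝ} (hmono : MonotoneOn (fun u => cumHaz1 lam1 u s) (Ici s))
    (hst : s ≤ t) : 0 ≤ cumHaz1 lam1 t s := by
  simpa [cumHaz1] using hmono self_mem_Ici hst hst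

end PostIntermediateHazard

namespace ProbabilityTheory

lemma expMeasure_Iic {r : ℝ} (hr : 0 < r) (x : ℝ) :
    expMeasure r (Iic x) = ENNReal.ofReal (1 - Real.exp (-(r * x))) := by
  have := isProbabilityMeasure_expMeasure hr
  rw [← ofReal_cdf, cdf_expMeasure_eq hr]
  split_ifs with hx
  · rfl
  · rw [ENNReal.ofReal_zero, eq_comm, ENNReal.ofReal_eq_zero, sub_nonpos, Real.one_le_exp_iff]
    nlinarith

lemma expMeasure_Ioi {r x : ℝ} (hr : 0 < r) (hx : 0 ≤ x) :
    expMeasure r (Ioi x) = ENNReal.ofReal (Real.exp (-(r * x))) := by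
  have := isProbabilityMeasure_expMeasure hr
  have hexp : Real.exp (-(r * x)) ≤ 1 := Real.exp_le_one_iff.2 (by nlinarith)
  rw [← compl_Iic, prob_compl_eq_one_sub measurableSet_Iic, expMeasure_Iic hr, ← ENNReal.ofReal_one,
    ← ENNReal.ofReal_sub _ (by linarith), sub_sub_cancel]

end ProbabilityTheory

/-- Inverse transform sampling: `e⁻¹(E)` with `E ~ Exp(1)` has density `λ e^{-Λ}` on `[0, ∞)`. -/
lemma setLIntegral_map_symm_expMeasure {lam : ℝ → ℝ} (hc : ContinuousOn lam (Ici 0))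
    {e : ℝ ≃o ℝ} (he : EqOn e (cumHaz lam) (Ici 0)) (t : ℝ) (G : ℝ → ℝ≥0∞) :
    ∫⁻ s in Icc 0 t, G s ∂(expMeasure 1).map e.symm =
      ∫⁻ s in Icc 0 t, ENNReal.ofReal (lam s * Real.exp (-cumHaz lam s)) * G s := by
  have he0 : e 0 = 0 := (he self_mem_Ici).trans intervalIntegral.integral_same
  have hemb : MeasurableEmbedding e.symm := e.symm.toHomeomorph.measurableEmbedding
  have hderiv : ∀ s ∈ Icc 0 t, HasDerivWithinAt e (lam s) (Icc 0 t) s := fun s hs =>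
    ((hasDerivWithinAt_cumHaz hc hs.1).mono Icc_subset_Ici_self).congr
      (fun y hy => he hy.1) (he hs.1)
  calc ∫⁻ s in Icc 0 t, G s ∂(expMeasure 1).map e.symm
      = ∫⁻ x in Icc 0 (e t), exponentialPDF 1 x * G (e.symm x) := by
        rw [hemb.restrict_map, hemb.lintegral_map, e.symm.preimage_Icc, e.symm_symm, he0]
        exact setLIntegral_withDensity_eq_setLIntegral_mul_non_measurable _
          (measurable_exponentialPDFReal 1).ennreal_ofReal _ measurableSet_Icc
          (ae_of_all _ fun _ => ENNReal.ofReal_lt_top)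
    _ = ∫⁻ x in e '' Icc 0 t, ENNReal.ofReal (Real.exp (-x)) * G (e.symm x) := by
        rw [e.image_Icc, he0]
        refine setLIntegral_congr_fun measurableSet_Icc fun x hx => ?_
        rw [exponentialPDF_of_nonneg hx.1, one_mul, one_mul]
    _ = ∫⁻ s in Icc 0 t,
          ENNReal.ofReal (lam s) * (ENNReal.ofReal (Real.exp (-e s)) * G (e.symm (e s))) :=
        lintegral_image_eq_lintegral_deriv_mul_of_monotoneOn measurableSet_Icc hderiv
          (e.monotone.monotoneOn _) _
    _ = _ := setLIntegral_congr_fun measurableSet_Icc fun s hs => by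
        rw [e.symm_apply_apply, he hs.1, ENNReal.ofReal_mul' (Real.exp_nonneg _), mul_assoc]

lemma MeasureTheory.Measure.prod_prod_setOf_eq_setLIntegral {α β γ : Type*} [MeasurableSpace α]
    [MeasurableSpace β] [MeasurableSpace γ] {μ : Measure α} {ν : Measure β} {ρ : Measure γ}
    [SFinite ν] [SFinite ρ] {A : Set α} {U : α → Set β} {V : α → Set γ} (hA : MeasurableSet A)
    (hS : MeasurableSet {p : α × β × γ | p.1 ∈ A ∧ p.2.1 ∈ U p.1 ∧ p.2.2 ∈ V p.1}) :
    μ.prod (ν.prod ρ) {p | p.1 ∈ A ∧ p.2.1 ∈ U p.1 ∧ p.2.2 ∈ V p.1} =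
      ∫⁻ x in A, ν (U x) * ρ (V x) ∂μ := by
  rw [Measure.prod_apply hS, ← lintegral_indicator hA]
  refine lintegral_congr fun x => ?_
  by_cases hx : x ∈ A
  · rw [indicator_of_mem hx, ← Measure.prod_prod]
    congr 1
    ext
    simp [hx]
  · simp [hx]

lemma measurableSet_setOf_mem_Ioi_Iic {A : Set ℝ} (hA : MeasurableSet A) {f g : ℝ → ℝ}
    (hf : ContinuousOn f A) (hg : ContinuousOn g A) :
    MeasurableSet {p : ℝ × ℝ × ℝ | p.1 ∈ A ∧ p.2.1 ∈ Ioi (f p.1) ∧ p.2.2 ∈ Iic (g p.1)} := by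
  classical
  have hf' : Measurable (A.piecewise f 0) := hf.measurable_piecewise continuousOn_const hA
  have hg' : Measurable (A.piecewise g 0) := hg.measurable_piecewise continuousOn_const hA
  convert (measurable_fst hA).inter
    ((measurableSet_lt (hf'.comp measurable_fst) (measurable_fst.comp measurable_snd)).inter
      (measurableSet_le (measurable_snd.comp measurable_snd) (hg'.comp measurable_fst))) using 1
  ext p
  simp only [mem_ofPred_eq, mem_inter_iff, mem_preimage, mem_Ioi, mem_Iic, Function.comp_apply]
  exact and_congr_right fun h => by simp only [piecewise_eq_of_mem _ _ _ h]

lemma map_comp_prodMk_prodMk_eq_prod_of_iIndepFun {Ω β γ : Type*} [MeasurableSpace Ω]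
    [MeasurableSpace β] [MeasurableSpace γ] {P : Measure Ω} [IsProbabilityMeasure P]
    {X Y Z : Ω → β} (h : iIndepFun ![X, Y, Z] P) (hX : AEMeasurable X P) (hY : AEMeasurable Y P)
    (hZ : AEMeasurable Z P) {φ : β → γ} (hφ : Measurable φ) :
    P.map (fun ω => (φ (X ω), Y ω, Z ω)) = ((P.map X).map φ).prod ((P.map Y).prod (P.map Z)) := by
  have hmeas : ∀ i, AEMeasurable (![X, Y, Z] i) P := by
    intro i; fin_cases i <;> assumption
  have hYZ : IndepFun Y Z P := by simpa using h.indepFun (show (1 : Fin 3) ≠ 2 by decide)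
  have hXYZ : IndepFun X (fun ω => (Y ω, Z ω)) P := by
    simpa using (h.indepFun_prodMk₀ hmeas 1 2 0 (by decide) (by decide)).symm
  calc P.map (fun ω => (φ (X ω), Y ω, Z ω))
      = (P.map fun ω => (X ω, Y ω, Z ω)).map (Prod.map φ id) :=
        (AEMeasurable.map_map_of_aemeasurable (hφ.prodMap measurable_id).aemeasurable
          (hX.prodMk (hY.prodMk hZ))).symm
    _ = _ := by
        rw [(indepFun_iff_map_prod_eq_prod_map_map hX (hY.prodMk hZ)).1 hXYZ,
          ← Measure.map_prod_map _ _ hφ measurable_id, Measure.map_id,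
          (indepFun_iff_map_prod_eq_prod_map_map hY hZ).1 hYZ]

/-- `f` plays the role of `Λ₀` and `g` that of `Λ₁(·, t₁)`. -/
lemma terminal_le_and_intermediate_lt_iff {f g : ℝ → ℝ} {t₁ d₀ t₂ e₃ t : ℝ}
    (hf : StrictMonoOn f (Ici 0)) (hg : StrictMonoOn g (Ici t₁)) (ht₁ : 0 ≤ t₁) (hd₀ : 0 ≤ d₀)
    (ht₂ : t₁ < d₀ → t₁ ≤ t₂ ∧ g t₂ = e₃) :
    t₂ ≤ t ∧ t₁ < d₀ ↔ t₁ ≤ t ∧ f t₁ < f d₀ ∧ e₃ ≤ g t := by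
  rw [hf.lt_iff_lt ht₁ hd₀]
  constructor
  · rintro ⟨h₂t, h₁₀⟩
    obtain ⟨h₁₂, rfl⟩ := ht₂ h₁₀
    exact ⟨h₁₂.trans h₂t, h₁₀, hg.monotoneOn h₁₂ (h₁₂.trans h₂t) h₂t⟩
  · rintro ⟨h₁t, h₁₀, he₃⟩
    obtain ⟨h₁₂, rfl⟩ := ht₂ h₁₀
    exact ⟨(hg.le_iff_le h₁₂ h₁t).1 he₃, h₁₀⟩

lemma setLIntegral_Icc_ofReal_eq_ofReal_intervalIntegral {f : ℝ → ℝ} {a b : ℝ} (hab : a ≤ b)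
    (hf : ContinuousOn f (Icc a b)) (hnn : ∀ x ∈ Icc a b, 0 ≤ f x) :
    ∫⁻ x in Icc a b, ENNReal.ofReal (f x) = ENNReal.ofReal (∫ x in a..b, f x) := by
  rw [intervalIntegral.integral_of_le hab, ← integral_Icc_eq_integral_Ioc,
    ofReal_integral_eq_lintegral_ofReal hf.integrableOn_Icc
      ((ae_restrict_iff' measurableSet_Icc).2 (ae_of_all _ hnn))]

lemma setLIntegral_hazard_expMeasure_eq_ofReal_integral {lamS lam0 : ℝ → ℝ}
    {lam1 : ℝ → ℝ → ℝ} (hScont : ContinuousOn lamS (Ici 0)) (h0cont : ContinuousOn lam0 (Ici 0))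
    (h1cont : ContinuousOn (fun p : ℝ × ℝ => lam1 p.1 p.2) {p : ℝ × ℝ | 0 ≤ p.2 ∧ p.2 ≤ p.1})
    (hSnn : ∀ x ∈ Ici (0:ℝ), 0 ≤ lamS x) (h0nn : ∀ x ∈ Ici (0:ℝ), 0 ≤ lam0 x)
    (h1mono : ∀ s : ℝ, 0 ≤ s → MonotoneOn (fun t => cumHaz1 lam1 t s) (Ici s))
    {t : ℝ} (ht : 0 ≤ t) :
    ∫⁻ s in Icc 0 t, ENNReal.ofReal (lamS s * Real.exp (-cumHaz lamS s)) *
        (expMeasure 1 (Ioi (cumHaz lam0 s)) * expMeasure 1 (Iic (cumHaz1 lam1 t s))) =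
      ENNReal.ofReal (∫ s in (0:ℝ)..t, Real.exp (-cumHaz lam0 s - cumHaz lamS s) * lamS s *
        (1 - Real.exp (-cumHaz1 lam1 t s))) := by
  have hΛS := (continuousOn_cumHaz hScont).mono (Icc_subset_Ici_self : Icc 0 t ⊆ Ici 0)
  have hΛ0 := (continuousOn_cumHaz h0cont).mono (Icc_subset_Ici_self : Icc 0 t ⊆ Ici 0)
  have hlamS := hScont.mono (Icc_subset_Ici_self : Icc 0 t ⊆ Ici 0)
  have hΛ1 := continuousOn_cumHaz1 h1cont t
  rw [← setLIntegral_Icc_ofReal_eq_ofReal_intervalIntegral ht (by fun_prop) fun s hs =>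
    mul_nonneg (mul_nonneg (Real.exp_nonneg _) (hSnn s hs.1)) (sub_nonneg.2
      (Real.exp_le_one_iff.2 (neg_nonpos.2 (cumHaz1_nonneg (h1mono s hs.1) hs.2))))]
  refine setLIntegral_congr_fun measurableSet_Icc fun s hs => ?_
  rw [expMeasure_Ioi one_pos (cumHaz_nonneg h0nn hs.1), expMeasure_Iic one_pos, one_mul, one_mul,
    ← ENNReal.ofReal_mul (Real.exp_nonneg _),
    ← ENNReal.ofReal_mul (mul_nonneg (hSnn s hs.1) (Real.exp_nonneg _)),
    sub_eq_add_neg (-_), Real.exp_add]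
  congr 1
  ring

theorem latent_terminal_after_intermediate_cif_general
    {Ω : Type*} [MeasurableSpace Ω] (P : Measure Ω) [IsProbabilityMeasure P]
    (lamS lam0 : ℝ → ℝ) (lam1 : ℝ → ℝ → ℝ)
    (hScont : ContinuousOn lamS (Set.Ici 0))
    (h0cont : ContinuousOn lam0 (Set.Ici 0))
    (h1cont : ContinuousOn (fun p : ℝ × ℝ => lam1 p.1 p.2) {p : ℝ × ℝ | 0 ≤ p.2 ∧ p.2 ≤ p.1})
    (hSpos : ∀ t ∈ Set.Ici (0:ℝ), 0 < lamS t)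
    (h0pos : ∀ t ∈ Set.Ici (0:ℝ), 0 < lam0 t)
    (hStop : Tendsto (cumHaz lamS) atTop atTop)
    (h1mono : ∀ s : ℝ, 0 ≤ s → StrictMonoOn (fun t => cumHaz1 lam1 t s) (Set.Ici s))
    (E1 E2 E3 : Ω → ℝ)
    (hindep : iIndepFun ![E1, E2, E3] P)
    (hE1d : P.map E1 = expMeasure 1)
    (hE2d : P.map E2 = expMeasure 1)
    (hE3d : P.map E3 = expMeasure 1)
    (T1 D0 T2 : Ω → ℝ)
    (hT1 : ∀ ω, 0 ≤ T1 ω ∧ cumHaz lamS (T1 ω) = E1 ω)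
    (hD0 : ∀ ω, 0 ≤ D0 ω ∧ cumHaz lam0 (D0 ω) = E2 ω)
    (hT2b : ∀ ω, T1 ω < D0 ω → T1 ω ≤ T2 ω ∧ cumHaz1 lam1 (T2 ω) (T1 ω) = E3 ω)
    :
    ∀ t : ℝ, 0 ≤ t →
      P {ω | T2 ω ≤ t ∧ T1 ω < D0 ω} =
        ENNReal.ofReal
          (∫ s in (0:ℝ)..t, Real.exp (-cumHaz lam0 s - cumHaz lamS s) * lamS s *
            (1 - Real.exp (-cumHaz1 lam1 t s))) := by
  intro t ht
  have := isProbabilityMeasure_expMeasure one_pos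
  obtain ⟨e, he⟩ := exists_orderIso_eqOn_cumHaz hScont hSpos hStop
  have hS := measurableSet_setOf_mem_Ioi_Iic measurableSet_Icc
    ((continuousOn_cumHaz h0cont).mono Icc_subset_Ici_self) (continuousOn_cumHaz1 h1cont t)
  have hevent : {ω | T2 ω ≤ t ∧ T1 ω < D0 ω} = (fun ω => (e.symm (E1 ω), E2 ω, E3 ω)) ⁻¹'
      {p | p.1 ∈ Icc 0 t ∧ p.2.1 ∈ Ioi (cumHaz lam0 p.1) ∧ p.2.2 ∈ Iic (cumHaz1 lam1 t p.1)} := by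
    ext ω
    obtain ⟨hT1nn, hT1E1⟩ := hT1 ω
    simp only [mem_ofPred_eq, mem_preimage, mem_Icc, mem_Ioi, mem_Iic, ← hT1E1, ← he hT1nn,
      e.symm_apply_apply, hT1nn, true_and, ← (hD0 ω).2]
    exact terminal_le_and_intermediate_lt_iff (strictMonoOn_cumHaz h0cont h0pos)
      (h1mono _ hT1nn) hT1nn (hD0 ω).1 (hT2b ω)
  -- `Measure.map` along a function that is not a.e.-measurable is `0`.
  have hE1 : AEMeasurable E1 P := .of_map_ne_zero (hE1d ▸ IsProbabilityMeasure.ne_zero _)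
  have hE2 : AEMeasurable E2 P := .of_map_ne_zero (hE2d ▸ IsProbabilityMeasure.ne_zero _)
  have hE3 : AEMeasurable E3 P := .of_map_ne_zero (hE3d ▸ IsProbabilityMeasure.ne_zero _)
  rw [hevent, ← Measure.map_apply_of_aemeasurable (by fun_prop) hS,
    map_comp_prodMk_prodMk_eq_prod_of_iIndepFun hindep hE1 hE2 hE3 e.symm.continuous.measurable,
    hE1d, hE2d, hE3d,
    Measure.prod_prod_setOf_eq_setLIntegral (U := fun s => Ioi (cumHaz lam0 s))
      (V := fun s => Iic (cumHaz1 lam1 t s)) measurableSet_Icc hS,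
    setLIntegral_map_symm_expMeasure hScont he]
  exact setLIntegral_hazard_expMeasure_eq_ofReal_integral hScont h0cont h1cont
    (fun x hx => (hSpos x hx).le) (fun x hx => (h0pos x hx).le)
    (fun s hs => (h1mono s hs).monotoneOn) ht

/-- cumulative incidence of the terminal event following the
intermediate event:
`P(T₂ ≤ t, T₁ < D₀) = ∫₀ᵗ exp(−Λ₀(s)−Λ⋆(s)) λ⋆(s) (1 − exp(−Λ₁(t,s))) ds`. -/
theorem latent_terminal_after_intermediate_cif
    {Ω : Type*} [MeasurableSpace Ω] (P : Measure Ω) [IsProbabilityMeasure P]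
    (lamS lam0 : ℝ → ℝ) (lam1 : ℝ → ℝ → ℝ)
    (hScont : ContinuousOn lamS (Set.Ici 0))
    (h0cont : ContinuousOn lam0 (Set.Ici 0))
    (h1cont : ContinuousOn (fun p : ℝ × ℝ => lam1 p.1 p.2) {p : ℝ × ℝ | 0 ≤ p.2 ∧ p.2 ≤ p.1})
    (hSpos : ∀ t ∈ Set.Ici (0:ℝ), 0 < lamS t)
    (h0pos : ∀ t ∈ Set.Ici (0:ℝ), 0 < lam0 t)
    (h1nn : ∀ s t : ℝ, 0 ≤ s → s ≤ t → 0 ≤ lam1 t s)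
    (hStop : Tendsto (cumHaz lamS) atTop atTop)
    (h0top : Tendsto (cumHaz lam0) atTop atTop)
    (h1mono : ∀ s : ℝ, 0 ≤ s → StrictMonoOn (fun t => cumHaz1 lam1 t s) (Set.Ici s))
    (h1top : ∀ s : ℝ, 0 ≤ s → Tendsto (fun t => cumHaz1 lam1 t s) atTop atTop)
    (E1 E2 E3 : Ω → ℝ)
    (hE1m : Measurable E1) (hE2m : Measurable E2) (hE3m : Measurable E3)
    (hindep : iIndepFun ![E1, E2, E3] P)
    (hE1d : P.map E1 = expMeasure 1)
    (hE2d : P.map E2 = expMeasure 1)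
    (hE3d : P.map E3 = expMeasure 1)
    (T1 D0 T2 : Ω → ℝ)
    (hT1 : ∀ ω, 0 ≤ T1 ω ∧ cumHaz lamS (T1 ω) = E1 ω)
    (hD0 : ∀ ω, 0 ≤ D0 ω ∧ cumHaz lam0 (D0 ω) = E2 ω)
    (hT2a : ∀ ω, D0 ω ≤ T1 ω → T2 ω = D0 ω)
    (hT2b : ∀ ω, T1 ω < D0 ω → T1 ω ≤ T2 ω ∧ cumHaz1 lam1 (T2 ω) (T1 ω) = E3 ω)
    :
    ∀ t : ℝ, 0 ≤ t →
      P {ω | T2 ω ≤ t ∧ T1 ω < D0 ω} =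
        ENNReal.ofReal
          (∫ s in (0:ℝ)..t, Real.exp (-cumHaz lam0 s - cumHaz lamS s) * lamS s *
            (1 - Real.exp (-cumHaz1 lam1 t s))) :=
  latent_terminal_after_intermediate_cif_general P lamS lam0 lam1 hScont h0cont h1cont hSpos h0pos
    hStop h1mono E1 E2 E3 hindep hE1d hE2d hE3d T1 D0 T2 hT1 hD0 hT2b
end
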